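/- Let s, E₀, α_X be real numbers with α_X² + E₀²/4 = 1/4, −1 < E₀ < 1, and 0 < s ≤ π/3. Define ψ₀ = (1/2)·I + α_X·X − (E₀/2)·Z, H = −Z, V₀ = exp(i s H) · exp(i s ψ₀) · exp(−i s H) and ψ₁ = V₀ · ψ₀ · V₀†. Then the real part of trace(H · ψ₁) is strictly less than E₀, i.e. one DBAC step strictly lowers the energy of any non-eigenstate. -/

import Mathlib

open Matrix Complex

/-- The Pauli X matrix. -/
def PauliX : Matrix (Fin 2) (Fin 2) ℂ := !![0, 1; 1, 0]

/-- The Pauli Y matrix. -/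
def PauliY : Matrix (Fin 2) (Fin 2) ℂ := !![0, -Complex.I; Complex.I, 0]

/-- The Pauli Z matrix. -/
def PauliZ : Matrix (Fin 2) (Fin 2) ℂ := !![1, 0; 0, -1]

set_option maxHeartbeats 1000000 in
lemma exp_smul_idem (P : Matrix (Fin 2) (Fin 2) ℂ) (hP : P * P = P) (c : ℂ) :
    NormedSpace.exp (c • P) = 1 + (Complex.exp c - 1) • P := by
  letI : SeminormedRing (Matrix (Fin 2) (Fin 2) ℂ) := Matrix.linftyOpSemiNormedRing
  letI : NormedRing (Matrix (Fin 2) (Fin 2) ℂ) := Matrix.linftyOpNormedRing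
  letI : NormedAlgebra ℂ (Matrix (Fin 2) (Fin 2) ℂ) := Matrix.linftyOpNormedAlgebra
  have hPn : ∀ n : ℕ, P ^ (n + 1) = P := by
    intro n; induction n with
    | zero => simp
    | succ k ih => rw [pow_succ, ih, hP]
  have hterm : ∀ n : ℕ, ((n.factorial : ℂ))⁻¹ • (c • P) ^ n = (((n.factorial : ℂ))⁻¹ * c ^ n) • P ^ n := by
    intro n; rw [smul_pow, smul_smul]
  have hsum : Summable (fun n : ℕ => ((n.factorial : ℂ))⁻¹ • (c • P) ^ n) :=
    NormedSpace.expSeries_summable' (c • P)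
  have hsumC : Summable (fun n : ℕ => ((n.factorial : ℂ))⁻¹ * c ^ n) := by
    simpa [smul_eq_mul] using NormedSpace.expSeries_summable' (𝕂 := ℂ) c
  have hsumC' : Summable (fun n : ℕ => (((n+1).factorial : ℂ))⁻¹ * c ^ (n + 1)) :=
    (summable_nat_add_iff 1).2 hsumC
  have hexpc : Complex.exp c = 1 + ∑' n : ℕ, (((n+1).factorial : ℂ))⁻¹ * c ^ (n + 1) := by
    rw [Complex.exp_eq_exp_ℂ, NormedSpace.exp_eq_tsum ℂ]
    simp only [smul_eq_mul]
    conv_lhs => rw [Summable.tsum_eq_zero_add hsumC]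
    norm_num
  rw [NormedSpace.exp_eq_tsum ℂ]
  simp_rw [hterm]
  rw [Summable.tsum_eq_zero_add (by simpa [hterm] using hsum)]
  simp_rw [hPn]
  rw [Summable.tsum_smul_const hsumC', hexpc]
  simp [pow_zero]

set_option maxHeartbeats 2000000 in
theorem dbac_one_step_strict_cooling (s E₀ αX : ℝ)
    (hpure : αX ^ 2 + E₀ ^ 2 / 4 = 1 / 4)
    (hE₀l : -1 < E₀) (hE₀u : E₀ < 1)
    (hs0 : 0 < s) (hs1 : s ≤ Real.pi / 3)
    (ψ₀ : Matrix (Fin 2) (Fin 2) ℂ)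
    (hψ₀ : ψ₀ = (1 / 2 : ℂ) • 1 + (αX : ℂ) • PauliX - ((E₀ : ℂ) / 2) • PauliZ)
    (H : Matrix (Fin 2) (Fin 2) ℂ) (hH : H = -PauliZ)
    (V₀ : Matrix (Fin 2) (Fin 2) ℂ)
    (hV₀ : V₀ = NormedSpace.exp ((Complex.I * s) • H) *
        NormedSpace.exp ((Complex.I * s) • ψ₀) *
        NormedSpace.exp ((-(Complex.I * s)) • H))
    (ψ₁ : Matrix (Fin 2) (Fin 2) ℂ) (hψ₁ : ψ₁ = V₀ * ψ₀ * V₀ᴴ) :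
    ((H * ψ₁).trace).re < E₀ := by
  set z : ℂ := Complex.exp (Complex.I * s) with hzdef
  set w : ℂ := Complex.exp (-(Complex.I * s)) with hwdef
  have hzw : z * w = 1 := by
    rw [hzdef, hwdef, ← Complex.exp_add]; simp
  have hpc : (αX : ℂ) ^ 2 + (E₀ : ℂ) ^ 2 / 4 = 1 / 4 := by
    have := congrArg (Complex.ofReal) hpure
    push_cast at this
    exact this
  have hψe : ψ₀ = !![(1 - (E₀:ℂ))/2, (αX:ℂ); (αX:ℂ), (1 + (E₀:ℂ))/2] := by
    rw [hψ₀]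
    ext i j
    fin_cases i <;> fin_cases j <;>
      simp [PauliX, PauliZ, Matrix.one_apply] <;> ring
  have hidem : ψ₀ * ψ₀ = ψ₀ := by
    rw [hψe]
    ext i j
    fin_cases i <;> fin_cases j <;>
      simp [Matrix.mul_apply, Fin.sum_univ_two] <;>
      first
      | ring1
      | linear_combination hpc
  have hE1 : NormedSpace.exp ((Complex.I * s) • H) = !![w, 0; 0, z] := by
    have h1 : (Complex.I * s) • H = Matrix.diagonal ![-(Complex.I * s), Complex.I * s] := by
      rw [hH]
      ext i j
      fin_cases i <;> fin_cases j <;> simp [PauliZ, Matrix.diagonal]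
    rw [h1, Matrix.exp_diagonal]
    ext i j
    fin_cases i <;> fin_cases j <;>
      simp [Matrix.diagonal, hzdef, hwdef, ← Complex.exp_eq_exp_ℂ]
  have hE2 : NormedSpace.exp ((-(Complex.I * s)) • H) = !![z, 0; 0, w] := by
    have h1 : (-(Complex.I * s)) • H = Matrix.diagonal ![Complex.I * s, -(Complex.I * s)] := by
      rw [hH]
      ext i j
      fin_cases i <;> fin_cases j <;> simp [PauliZ, Matrix.diagonal]
    rw [h1, Matrix.exp_diagonal]
    ext i j
    fin_cases i <;> fin_cases j <;>
      simp [Matrix.diagonal, hzdef, hwdef, ← Complex.exp_eq_exp_ℂ]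
  have hEψ : NormedSpace.exp ((Complex.I * s) • ψ₀) =
      !![1 + (z - 1) * (1 - (E₀:ℂ))/2, (z - 1) * (αX:ℂ);
        (z - 1) * (αX:ℂ), 1 + (z - 1) * (1 + (E₀:ℂ))/2] := by
    rw [exp_smul_idem ψ₀ hidem _, hψe]
    ext i j
    fin_cases i <;> fin_cases j <;>
      simp [Matrix.add_apply, Matrix.smul_apply, Matrix.one_apply, smul_eq_mul, ← hzdef] <;> ring
  have hV : V₀ = !![((1 - (E₀:ℂ)) * z + (1 + (E₀:ℂ)))/2, (αX:ℂ) * (z - 1) * w^2;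
      (αX:ℂ) * (z - 1) * z^2, ((1 + (E₀:ℂ)) * z + (1 - (E₀:ℂ)))/2] := by
    rw [hV₀, hE1, hEψ, hE2]
    ext i j
    fin_cases i <;> fin_cases j <;>
      simp [Matrix.mul_apply, Fin.sum_univ_two]
    · linear_combination (1 + (z - 1) * (1 - (E₀:ℂ))/2) * hzw
    · ring
    · ring
    · linear_combination (1 + (z - 1) * (1 + (E₀:ℂ))/2) * hzw
  have hstz : (starRingEnd ℂ) z = w := by
    rw [hzdef, hwdef, ← Complex.exp_conj]
    congr 1
    simp
  have hstw : (starRingEnd ℂ) w = z := by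
    rw [hzdef, hwdef, ← Complex.exp_conj]
    congr 1
    simp
  have hVH : V₀ᴴ = !![((1 - (E₀:ℂ)) * w + (1 + (E₀:ℂ)))/2, (αX:ℂ) * (w - 1) * w^2;
      (αX:ℂ) * (w - 1) * z^2, ((1 + (E₀:ℂ)) * w + (1 - (E₀:ℂ)))/2] := by
    rw [hV]
    ext i j
    fin_cases i <;> fin_cases j <;>
      simp [Matrix.conjTranspose_apply, _root_.map_mul, _root_.map_sub, _root_.map_add,
        map_pow, map_div₀, _root_.map_one, Complex.conj_ofReal, hstz, hstw]
  have htr : (H * ψ₁).trace = (E₀ : ℂ) + (αX:ℂ)^2 * (z - w)^2 *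
      ((z + w) * (1 - (E₀:ℂ)) + 2 * (E₀:ℂ)) := by
    rw [hψ₁, hVH, hV, hψe, hH]
    simp [Matrix.trace, Matrix.mul_apply, Fin.sum_univ_two, PauliZ, Matrix.diag]
    linear_combination
      ((3/4 : ℂ) * (E₀:ℂ) + (1/4) * (E₀:ℂ)^3 + 2 * (αX:ℂ)^2 * (E₀:ℂ)
        - w * (αX:ℂ)^2 * (E₀:ℂ) + w^2 * (αX:ℂ)^2 * (E₀:ℂ)
        - z * (αX:ℂ)^2 * (E₀:ℂ) - 2 * z * w * (αX:ℂ)^2 * (E₀:ℂ)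
        + z * w^2 * (αX:ℂ)^2 * (E₀:ℂ) + z^2 * (αX:ℂ)^2 * (E₀:ℂ)
        + z^2 * w * (αX:ℂ)^2 * (E₀:ℂ) - z^2 * w^2 * (αX:ℂ)^2 * (E₀:ℂ)) * hzw
      + (2 * (E₀:ℂ) - w * (E₀:ℂ) - z * (E₀:ℂ)) * hpc
  have hz : z = (Real.cos s : ℂ) + (Real.sin s : ℂ) * Complex.I := by
    rw [hzdef, mul_comm, Complex.exp_mul_I]
    simp only [← Complex.ofReal_cos, ← Complex.ofReal_sin]
  have hw : w = (Real.cos s : ℂ) - (Real.sin s : ℂ) * Complex.I := by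
    rw [hwdef]
    have : -(Complex.I * (s:ℂ)) = ((-s : ℝ) : ℂ) * Complex.I := by push_cast; ring
    rw [this, Complex.exp_mul_I]
    simp only [Complex.ofReal_neg, Complex.cos_neg, Complex.sin_neg,
      ← Complex.ofReal_cos, ← Complex.ofReal_sin]
    ring
  have key : (H * ψ₁).trace =
      ((E₀ - 2*(1-E₀^2)*(Real.sin s)^2*((Real.cos s)*(1-E₀)+E₀) : ℝ) : ℂ) := by
    rw [htr, hz, hw]
    simp only [Complex.ofReal_sub, Complex.ofReal_add, Complex.ofReal_mul,
      Complex.ofReal_pow, Complex.ofReal_one, Complex.ofReal_ofNat]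
    linear_combination (8 * (αX:ℂ)^2 * (Real.sin s:ℂ)^2 *
        ((Real.cos s:ℂ) * (1 - (E₀:ℂ)) + (E₀:ℂ))) * Complex.I_sq
      + (-8 * (Real.sin s:ℂ)^2 * ((Real.cos s:ℂ) * (1 - (E₀:ℂ)) + (E₀:ℂ))) * hpc
  rw [key, Complex.ofReal_re]
  have hπ : Real.pi / 3 < Real.pi := by linarith [Real.pi_pos]
  have hsin : 0 < Real.sin s := Real.sin_pos_of_pos_of_lt_pi hs0 (lt_of_le_of_lt hs1 hπ)
  have hcos : (1:ℝ)/2 ≤ Real.cos s := by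
    have h := Real.cos_le_cos_of_nonneg_of_le_pi (le_of_lt hs0)
      (le_of_lt hπ) hs1
    rwa [Real.cos_pi_div_three] at h
  have h1 : (0:ℝ) < 1 - E₀^2 := by nlinarith
  have h2 : (0:ℝ) < Real.cos s * (1 - E₀) + E₀ := by nlinarith
  have h3 : (0:ℝ) < Real.sin s ^ 2 := pow_pos hsin 2
  nlinarith [mul_pos (mul_pos h1 h3) h2]
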